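/- Let Q be a random variable whose CDF F is continuous on ℝ, with F(q) = 0 for q ≤ 0 and F(q) = 1 for q ≥ 1, and F strictly increasing on [0,1]. Then the anomaly score AS = 1 - 2·min{F(Q), 1 - F(Q)} is uniformly distributed on (0,1). -/

import Mathlib

open MeasureTheory Set

/-!
`F` restricts to an increasing bijection of `[0, 1]`, so `F ⁻¹' Iic t = Iic q` with `F q = t`
and hence `P (F Q ≤ t) = F q = t`: the variable `F Q` is uniform on `(0, 1)` (probability integral
transform). The two-sided tail map `u ↦ 1 - 2 min u (1 - u) = |2u - 1|` preserves this law, since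
its sublevel set `{≤ a}` is the interval of length `a` centred at `1 / 2`.
-/

-- `ENNReal.ofReal` clips at `0`, so `ENNReal.ofReal (min a 1)` is the full uniform CDF.
theorem volume_restrict_Ioo_zero_one_Iic (a : ℝ) :
    volume.restrict (Ioo (0 : ℝ) 1) (Iic a) = ENNReal.ofReal (min a 1) := by
  rw [Measure.restrict_congr_set Ioo_ae_eq_Ioc, Measure.restrict_apply measurableSet_Iic,
    inter_comm, Ioc_inter_Iic, Real.volume_Ioc, sub_zero, min_comm]

theorem eq_volume_restrict_Ioo_of_Iic {μ : Measure ℝ} [IsFiniteMeasure μ]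
    (h : ∀ a, μ (Iic a) = ENNReal.ofReal (min a 1)) : μ = volume.restrict (Ioo 0 1) :=
  Measure.ext_of_Iic _ _ fun a => by rw [h, volume_restrict_Ioo_zero_one_Iic]

def twoSidedTail (u : ℝ) : ℝ := 1 - 2 * min u (1 - u)

theorem continuous_twoSidedTail : Continuous twoSidedTail := by
  unfold twoSidedTail; fun_prop

theorem twoSidedTail_preimage_Iic (a : ℝ) :
    twoSidedTail ⁻¹' Iic a = Icc ((1 - a) / 2) ((1 + a) / 2) := by
  ext u
  have hmin : twoSidedTail u ≤ a ↔ (1 - a) / 2 ≤ min u (1 - u) := by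
    unfold twoSidedTail; constructor <;> intro h <;> linarith
  rw [mem_preimage, mem_Iic, hmin, le_min_iff, mem_Icc]
  constructor <;> rintro ⟨h₁, h₂⟩ <;> constructor <;> linarith

theorem map_twoSidedTail_volume_restrict_Ioo :
    (volume.restrict (Ioo (0 : ℝ) 1)).map twoSidedTail = volume.restrict (Ioo 0 1) := by
  refine eq_volume_restrict_Ioo_of_Iic fun a => ?_
  rw [Measure.map_apply continuous_twoSidedTail.measurable measurableSet_Iic,
    twoSidedTail_preimage_Iic,
    Measure.restrict_congr_set Ioo_ae_eq_Icc, Measure.restrict_apply measurableSet_Icc,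
    Icc_inter_Icc, Real.volume_Icc]
  rcases le_total a 1 with ha | ha
  · rw [max_eq_left (by linarith), min_eq_left (by linarith), min_eq_left ha]
    ring_nf
  · rw [max_eq_right (by linarith), min_eq_right (by linarith), min_eq_right ha, sub_zero]

section CDF

variable {F : ℝ → ℝ}

theorem monotone_of_strictMonoOn_Icc_of_eq (hF0 : ∀ q ≤ (0 : ℝ), F q = 0)
    (hF1 : ∀ q ≥ (1 : ℝ), F q = 1) (hFmono : StrictMonoOn F (Icc (0 : ℝ) 1)) : Monotone F := by
  have hIic : MonotoneOn F (Iic 0) := fun x hx y hy _ => by rw [hF0 x hx, hF0 y hy]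
  have hIci : MonotoneOn F (Ici 1) := fun x hx y hy _ => by rw [hF1 x hx, hF1 y hy]
  refine hIic.Iic_union_Ici ?_
  rw [← Icc_union_Ici_eq_Ici zero_le_one]
  exact hFmono.monotoneOn.union_right hIci (isGreatest_Icc zero_le_one) isLeast_Ici

theorem exists_preimage_Iic_eq_Iic (hFcont : Continuous F) (hF0 : ∀ q ≤ (0 : ℝ), F q = 0)
    (hF1 : ∀ q ≥ (1 : ℝ), F q = 1) (hFmono : StrictMonoOn F (Icc (0 : ℝ) 1)) {t : ℝ}
    (ht : t ∈ Ico (0 : ℝ) 1) : ∃ q, F q = t ∧ F ⁻¹' Iic t = Iic q := by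
  have hF01 : t ∈ Icc (F 0) (F 1) := by
    rw [hF0 0 le_rfl, hF1 1 le_rfl]; exact ⟨ht.1, ht.2.le⟩
  obtain ⟨q, hq, hFq⟩ := intermediate_value_Icc zero_le_one hFcont.continuousOn hF01
  refine ⟨q, hFq, Set.ext fun y => ?_⟩
  simp only [mem_preimage, mem_Iic]
  refine ⟨fun hy => ?_, fun hy => ?_⟩
  · by_contra! hqy
    rcases le_or_gt 1 y with h1 | h1
    · exact ht.2.not_ge (hF1 y h1 ▸ hy)
    · exact (hFq ▸ hFmono hq ⟨hq.1.trans hqy.le, h1.le⟩ hqy).not_ge hy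
  · exact hFq ▸ monotone_of_strictMonoOn_Icc_of_eq hF0 hF1 hFmono hy

theorem map_eq_volume_restrict_Ioo_of_Iic_eq_ofReal (μ : Measure ℝ) [IsProbabilityMeasure μ]
    (hFcont : Continuous F) (hF0 : ∀ q ≤ (0 : ℝ), F q = 0)
    (hF1 : ∀ q ≥ (1 : ℝ), F q = 1) (hFmono : StrictMonoOn F (Icc (0 : ℝ) 1))
    (hμ : ∀ x, μ (Iic x) = ENNReal.ofReal (F x)) :
    μ.map F = volume.restrict (Ioo 0 1) := by
  have hF := monotone_of_strictMonoOn_Icc_of_eq hF0 hF1 hFmono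
  refine eq_volume_restrict_Ioo_of_Iic fun t => ?_
  rw [Measure.map_apply hFcont.measurable measurableSet_Iic]
  rcases lt_or_ge t 0 with ht0 | ht0
  · have hempty : F ⁻¹' Iic t = ∅ := eq_empty_of_forall_notMem fun x hx =>
      ht0.not_ge (((hF0 _ (min_le_right x 0)).symm.trans_le (hF (min_le_left x 0))).trans hx)
    rw [hempty, measure_empty, ENNReal.ofReal_of_nonpos ((min_le_left t 1).trans ht0.le)]
  rcases lt_or_ge t 1 with ht1 | ht1
  · obtain ⟨q, hFq, hpre⟩ := exists_preimage_Iic_eq_Iic hFcont hF0 hF1 hFmono ⟨ht0, ht1⟩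
    rw [hpre, hμ, hFq, min_eq_left ht1.le]
  · have huniv : F ⁻¹' Iic t = univ := eq_univ_of_forall fun x =>
      ((hF (le_max_left x 1)).trans_eq (hF1 _ (le_max_right x 1))).trans ht1
    rw [huniv, measure_univ, min_eq_right ht1, ENNReal.ofReal_one]

end CDF

/-- The anomaly score `AS = 1 - 2 * min (F Q) (1 - F Q)` is uniform on `(0,1)`
when `F` is the continuous CDF of `Q`, vanishing for `q ≤ 0`, equal to `1` for
`q ≥ 1`, and strictly increasing on `[0,1]`. -/
theorem anomaly_score_uniform
    {Ω : Type*} [MeasurableSpace Ω] (P : Measure Ω) [IsProbabilityMeasure P]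
    (Q : Ω → ℝ) (hQ : Measurable Q)
    (F : ℝ → ℝ) (hFcont : Continuous F)
    (hF0 : ∀ q ≤ (0 : ℝ), F q = 0) (hF1 : ∀ q ≥ (1 : ℝ), F q = 1)
    (hFmono : StrictMonoOn F (Icc (0 : ℝ) 1))
    (hCDF : ∀ x, P {ω | Q ω ≤ x} = ENNReal.ofReal (F x)) :
    Measure.map (fun ω => 1 - 2 * min (F (Q ω)) (1 - F (Q ω))) P
      = volume.restrict (Ioo (0 : ℝ) 1) := by
  have : IsProbabilityMeasure (P.map Q) := Measure.isProbabilityMeasure_map hQ.aemeasurable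
  have hlaw : ∀ x, P.map Q (Iic x) = ENNReal.ofReal (F x) := fun x => by
    rw [Measure.map_apply hQ measurableSet_Iic]; exact hCDF x
  calc P.map (fun ω => 1 - 2 * min (F (Q ω)) (1 - F (Q ω)))
      = ((P.map Q).map F).map twoSidedTail := by
        rw [Measure.map_map continuous_twoSidedTail.measurable hFcont.measurable,
          Measure.map_map (continuous_twoSidedTail.measurable.comp hFcont.measurable) hQ]
        rfl
    _ = volume.restrict (Ioo 0 1) := by
        rw [map_eq_volume_restrict_Ioo_of_Iic_eq_ofReal _ hFcont hF0 hF1 hFmono hlaw,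
          map_twoSidedTail_volume_restrict_Ioo]
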